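/- Let A be an n-by-n weighted shift matrix (n ≥ 2) with weights a_1, …, a_{n−1}, 0, where a_j ≠ 0 for all 1 ≤ j ≤ n−1 (exactly one zero weight, in the last position). Then A is irreducible: the only subspaces of ℂ^n invariant under both A and A* are {0} and ℂ^n. -/

import Mathlib

open Matrix

/-- The n-by-n weighted shift matrix with weights `a 0, …, a (n-1)`
(representing `a_1, …, a_n`): the `(i, i+1)` entry is `a i` (cyclically). -/
def wsMatrix {n : ℕ} (a : Fin n → ℂ) : Matrix (Fin n) (Fin n) ℂ :=
  fun i j => if (j : ℕ) = ((i : ℕ) + 1) % n then a i else 0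

/-- Two square complex matrices are unitarily equivalent if `B = U* A U`
for some unitary `U`. -/
def UnitarilyEquiv {n : ℕ} (A B : Matrix (Fin n) (Fin n) ℂ) : Prop :=
  ∃ U : Matrix (Fin n) (Fin n) ℂ, U ∈ Matrix.unitaryGroup (Fin n) ℂ ∧ B = Uᴴ * A * U


/-!
Since `a_n = 0`, the matrix `A` is strictly upper triangular, hence nilpotent, so every nonzero
`A`-invariant subspace `M` contains a nonzero vector of `ker A`. As `a_1, …, a_{n-1} ≠ 0`, this
kernel is spanned by `e_1`, so `e_1 ∈ M`; and `A* e_j = conj(a_j) e_{j+1}`, so `A*`-invariance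
puts every `e_j` into `M`.
-/

theorem Matrix.pow_card_eq_zero_of_apply_eq_zero_of_le {ι R : Type*} [Fintype ι] [DecidableEq ι]
    [LinearOrder ι] [CommRing R] (A : Matrix ι ι R) (hA : ∀ i j, j ≤ i → A i j = 0) :
    A ^ Fintype.card ι = 0 := by
  have hchar : A.charpoly = Polynomial.X ^ Fintype.card ι := by
    rw [A.charpoly_of_isUpperTriangular fun i j hji => hA i j hji.le]
    simp [hA]
  simpa [hchar] using A.aeval_self_charpoly

theorem Matrix.exists_mem_ne_zero_mulVec_eq_zero_of_isNilpotent {ι R : Type*} [Fintype ι]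
    [DecidableEq ι] [Semiring R] {A : Matrix ι ι R} (hA : IsNilpotent A)
    {M : Submodule R (ι → R)} (hM : ∀ x ∈ M, A *ᵥ x ∈ M) {x : ι → R} (hxM : x ∈ M)
    (hx : x ≠ 0) :
    ∃ y ∈ M, y ≠ 0 ∧ A *ᵥ y = 0 := by
  obtain ⟨N, hN⟩ := hA
  have hNx : A ^ N *ᵥ x = 0 := by rw [hN, zero_mulVec]
  clear hN
  induction N generalizing x with
  | zero => exact absurd (by simpa using hNx) hx
  | succ N ih =>
    by_cases hAx : A *ᵥ x = 0
    · exact ⟨x, hxM, hx, hAx⟩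
    · exact ih (hM x hxM) hAx (by rwa [pow_succ, ← mulVec_mulVec] at hNx)

section WeightedShift

variable {m : ℕ} (b : Fin (m + 1) → ℂ)

theorem wsMatrix_apply (i j : Fin (m + 1)) :
    wsMatrix b i j = if j = i + 1 then b i else 0 := by
  simp [wsMatrix, Fin.ext_iff, Fin.val_add]

theorem wsMatrix_mulVec_apply (x : Fin (m + 1) → ℂ) (i : Fin (m + 1)) :
    (wsMatrix b *ᵥ x) i = b i * x (i + 1) := by
  simp [mulVec, dotProduct, wsMatrix_apply]

theorem wsMatrix_conjTranspose_mulVec_single (i : Fin (m + 1)) :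
    (wsMatrix b)ᴴ *ᵥ Pi.single i 1 = star (b i) • Pi.single (i + 1) 1 := by
  ext j
  by_cases h : j = i + 1 <;> simp [mulVec, dotProduct, wsMatrix_apply, Pi.single_apply, h]

theorem wsMatrix_apply_eq_zero_of_le (hb : b (Fin.last m) = 0) {i j : Fin (m + 1)} (hji : j ≤ i) :
    wsMatrix b i j = 0 := by
  rw [wsMatrix_apply]
  split_ifs with hj
  · rw [Fin.add_one_le_iff.1 (show i + 1 ≤ i from hj ▸ hji), hb]
  · rfl

theorem isNilpotent_wsMatrix (hb : b (Fin.last m) = 0) : IsNilpotent (wsMatrix b) :=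
  ⟨_, pow_card_eq_zero_of_apply_eq_zero_of_le _ fun _ _ => wsMatrix_apply_eq_zero_of_le b hb⟩

theorem eq_smul_single_zero_of_wsMatrix_mulVec_eq_zero (hb : ∀ i : Fin m, b i.castSucc ≠ 0)
    {x : Fin (m + 1) → ℂ} (hx : wsMatrix b *ᵥ x = 0) : x = x 0 • Pi.single 0 1 := by
  ext j
  cases j using Fin.cases with
  | zero => simp
  | succ i =>
    have hxi := congrFun hx i.castSucc
    rw [wsMatrix_mulVec_apply, Fin.coeSucc_eq_succ, Pi.zero_apply] at hxi
    simp [(mul_eq_zero.1 hxi).resolve_left (hb i), Fin.succ_ne_zero]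

theorem wsMatrix_invariant_eq_top_of_single_zero_mem (hb : ∀ i : Fin m, b i.castSucc ≠ 0)
    {M : Submodule ℂ (Fin (m + 1) → ℂ)} (hM : ∀ x ∈ M, (wsMatrix b)ᴴ *ᵥ x ∈ M)
    (h0 : Pi.single 0 1 ∈ M) : M = ⊤ := by
  have hsingle : ∀ j, Pi.single j 1 ∈ M := by
    refine Fin.induction h0 fun i hi => ?_
    have hAi := hM _ hi
    rwa [wsMatrix_conjTranspose_mulVec_single, Fin.coeSucc_eq_succ,
      M.smul_mem_iff (star_ne_zero.2 (hb i))] at hAi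
  rw [eq_top_iff, ← (Pi.basisFun ℂ _).span_eq, Submodule.span_le]
  exact Set.range_subset_iff.2 fun j => by simpa using hsingle j

end WeightedShift

theorem stmt12_general (n : ℕ) (a : Fin n → ℂ)
    (ha : ∀ i : Fin n, (i : ℕ) + 1 < n → a i ≠ 0)
    (A : Matrix (Fin n) (Fin n) ℂ)
    (hA : A = wsMatrix fun i => if (i : ℕ) + 1 < n then a i else 0)
    (M : Submodule ℂ (Fin n → ℂ))
    (hM1 : ∀ x ∈ M, A.mulVec x ∈ M)
    (hM2 : ∀ x ∈ M, Aᴴ.mulVec x ∈ M) :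
    M = ⊥ ∨ M = ⊤ := by
  rcases n with _ | m
  · exact Or.inl (Subsingleton.elim _ _)
  set b : Fin (m + 1) → ℂ := fun i => if (i : ℕ) + 1 < m + 1 then a i else 0
  have hb_last : b (Fin.last m) = 0 := by simp [b]
  have hb : ∀ i : Fin m, b i.castSucc ≠ 0 := fun i => by simpa [b] using ha i.castSucc (by simp)
  subst hA
  refine or_iff_not_imp_left.2 fun hM => ?_
  obtain ⟨x, hxM, hx⟩ := M.exists_mem_ne_zero_of_ne_bot hM
  obtain ⟨y, hyM, hy, hAy⟩ :=
    exists_mem_ne_zero_mulVec_eq_zero_of_isNilpotent (isNilpotent_wsMatrix b hb_last) hM1 hxM hx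
  have hy_eq := eq_smul_single_zero_of_wsMatrix_mulVec_eq_zero b hb hAy
  have hy0 : y 0 ≠ 0 := fun h => hy (by rw [hy_eq, h, zero_smul])
  rw [hy_eq, M.smul_mem_iff hy0] at hyM
  exact wsMatrix_invariant_eq_top_of_single_zero_mem b hb hM2 hyM

theorem stmt12 (n : ℕ) (hn : 2 ≤ n) (a : Fin n → ℂ)
    (ha : ∀ i : Fin n, (i : ℕ) + 1 < n → a i ≠ 0)
    (A : Matrix (Fin n) (Fin n) ℂ)
    (hA : A = wsMatrix fun i => if (i : ℕ) + 1 < n then a i else 0)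
    (M : Submodule ℂ (Fin n → ℂ))
    (hM1 : ∀ x ∈ M, A.mulVec x ∈ M)
    (hM2 : ∀ x ∈ M, Aᴴ.mulVec x ∈ M) :
    M = ⊥ ∨ M = ⊤ :=
  stmt12_general n a ha A hA M hM1 hM2
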